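/- For every one-dimensional sand automaton, surjectivity implies P-surjectivity: if the global function f is surjective on all configurations, then every periodic configuration has a periodic preimage under f. -/

import Mathlib

/-- The extended integers `ℤ ∪ {-∞, +∞}`. -/
abbrev EZ : Type := WithBot (WithTop ℤ)

/-- Embedding of `ℤ` into the extended integers. -/
def finVal (n : ℤ) : EZ := ((n : WithTop ℤ) : EZ)

/-- The integer value of a finite extended integer (`0` on `±∞`). -/
def valZ (x : EZ) : ℤ := WithBot.recBotCoe 0 (fun y => WithTop.recTopCoe 0 id y) x

/-- The measuring device `β_l^m`. -/
noncomputable def beta (l : ℕ) (m : ℤ) (n : EZ) : EZ :=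
  if finVal (m + (l : ℤ)) < n then ⊤
  else if n < finVal (m - (l : ℤ)) then ⊥
  else WithBot.map (WithTop.map (fun k => k - m)) n

/-- Reference height: the value of `x` if finite, `0` if `x = ±∞`. -/
def refH (x : EZ) : ℤ := if x = ⊥ ∨ x = ⊤ then 0 else valZ x

/-- One-dimensional sandpile configurations. -/
abbrev Config : Type := ℤ → EZ

/-- The neighborhood sequence `d_r^i(c)`: the `2r`-tuple of measured differences. -/
noncomputable def nbhd (r : ℕ) (c : Config) (i : ℤ) : Fin (2 * r) → EZ :=
  fun j => beta r (refH (c i))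
    (c (i + (if (j : ℕ) < r then ((j : ℕ) : ℤ) - (r : ℤ) else ((j : ℕ) : ℤ) - (r : ℤ) + 1)))

/-- The global function of the sand automaton of radius `r` with local rule `lam`. -/
noncomputable def globalF (r : ℕ) (lam : (Fin (2 * r) → EZ) → ℤ) (c : Config) : Config :=
  fun i => if c i = ⊥ ∨ c i = ⊤ then c i
    else finVal (valZ (c i) + lam (nbhd r c i))

/-- Finite configurations. -/
def FiniteConf (c : Config) : Prop := ∃ k : ℕ, ∀ i : ℤ, (k : ℤ) ≤ |i| → c i = finVal 0

/-- Periodic configurations. -/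
def PeriodicConf (c : Config) : Prop := ∃ p : ℤ, p ≠ 0 ∧ ∀ i : ℤ, c (i + p) = c i

/-! Let `e` be a preimage of a `p`-periodic configuration `c`. At every cell, `e` is `±∞` or
within `r` of `c`, so the windows of length `2r` of `e` at the positions `k * p` take only
finitely many values; two of them coincide, at `k₁ * p` and `k₂ * p`. The segment of `e` between
these positions, repeated periodically, agrees with `e` on the radius-`r` neighbourhood of every
cell of one period, so its image agrees with `c` on a period, and both being periodic, everywhere.
-/

open Function

lemma valZ_finVal (n : ℤ) : valZ (finVal n) = n := rfl

lemma finVal_valZ {x : EZ} (hbot : x ≠ ⊥) (htop : x ≠ ⊤) : finVal (valZ x) = x := by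
  induction x using WithBot.recBotCoe with
  | bot => exact absurd rfl hbot
  | coe y =>
    induction y using WithTop.recTopCoe with
    | top => exact absurd rfl htop
    | coe n => rfl

section Periodic

variable {α : Type*} {f g : ℤ → α} {a q : ℤ}

lemma Function.Periodic.exists_pos (hf : Periodic f q) (hq : q ≠ 0) :
    ∃ p, 0 < p ∧ Periodic f p := by
  rcases hq.lt_or_gt with hneg | hpos
  · exact ⟨-q, neg_pos.2 hneg, hf.neg⟩
  · exact ⟨q, hpos, hf⟩

lemma Function.Periodic.eq_of_eqOn_Ico (hq : 0 < q) (hf : Periodic f q) (hg : Periodic g q)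
    (h : ∀ i ∈ Set.Ico a (a + q), f i = g i) : f = g := by
  funext i
  have hmod : ∀ {φ : ℤ → α}, Periodic φ q → φ (toIcoMod hq a i) = φ i := fun hφ => by
    rw [← self_sub_toIcoDiv_zsmul, hφ.sub_zsmul_eq]
  rw [← hmod hf, ← hmod hg, h _ (toIcoMod_mem_Ico hq a i)]

noncomputable def periodicExtension (f : ℤ → α) (hq : 0 < q) (a : ℤ) : ℤ → α :=
  fun i => f (toIcoMod hq a i)

lemma periodicExtension_periodic (f : ℤ → α) (hq : 0 < q) (a : ℤ) :
    Periodic (periodicExtension f hq a) q := fun i => by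
  simp only [periodicExtension, toIcoMod_add_right]

lemma periodicExtension_eq_of_window {w : ℤ} (hq : 0 < q)
    (hwin : ∀ i ∈ Set.Ico a (a + w), f (i + q) = f i) :
    ∀ i ∈ Set.Ico a (a + q + w), periodicExtension f hq a i = f i := by
  intro i
  induction i using Int.strongRec (m := a + q) with
  | lt i hi =>
    rintro ⟨hai, -⟩
    exact congrArg f ((toIcoMod_eq_self hq).2 ⟨hai, hi⟩)
  | ge i hi ih =>
    rintro ⟨-, hiw⟩
    calc periodicExtension f hq a i
        = periodicExtension f hq a (i - q) := ((periodicExtension_periodic f hq a).sub_eq i).symm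
      _ = f (i - q) := ih _ (by omega) ⟨by omega, by omega⟩
      _ = f i := by simpa using (hwin (i - q) ⟨by omega, by omega⟩).symm

end Periodic

section SandAutomaton

variable {r : ℕ} {lam : (Fin (2 * r) → EZ) → ℤ}

lemma globalF_congr {e₁ e₂ : Config} {i : ℤ} (h : ∀ j ∈ Set.Icc (i - r) (i + r), e₁ j = e₂ j) :
    globalF r lam e₁ i = globalF r lam e₂ i := by
  have hi : e₁ i = e₂ i := h i ⟨by omega, by omega⟩
  have hnbhd : nbhd r e₁ i = nbhd r e₂ i := by
    funext j
    simp only [nbhd, hi]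
    congr 1
    exact h _ ⟨by split <;> omega, by split <;> omega⟩
  simp only [globalF, hi, hnbhd]

lemma globalF_comp_add_right (e : Config) (q : ℤ) :
    globalF r lam (fun i => e (i + q)) = fun i => globalF r lam e (i + q) := by
  funext i
  have hnbhd : nbhd r (fun i => e (i + q)) i = nbhd r e (i + q) := by
    funext j
    simp only [nbhd, add_right_comm]
  simp only [globalF, hnbhd]

lemma Function.Periodic.globalF {e : Config} {q : ℤ} (he : Periodic e q) :
    Periodic (globalF r lam e) q := fun i => by
  rw [← congrFun (globalF_comp_add_right e q) i, show (fun j => e (j + q)) = e from funext he]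

def preimageValues (r : ℕ) (x : EZ) : Set EZ :=
  {⊥, ⊤} ∪ (fun d => finVal (valZ x + d)) '' Set.Icc (-(r : ℤ)) r

lemma preimageValues_finite (r : ℕ) (x : EZ) : (preimageValues r x).Finite :=
  (Set.toFinite _).union ((Set.finite_Icc _ _).image _)

lemma mem_preimageValues (hlam : ∀ v, -(r : ℤ) ≤ lam v ∧ lam v ≤ r) (e : Config) (i : ℤ) :
    e i ∈ preimageValues r (globalF r lam e i) := by
  by_cases hinf : e i = ⊥ ∨ e i = ⊤
  · left
    simpa using hinf
  · right
    obtain ⟨hbot, htop⟩ := not_or.1 hinf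
    have hbound := hlam (nbhd r e i)
    refine ⟨-lam (nbhd r e i), ⟨by omega, by omega⟩, ?_⟩
    simp only [globalF, hinf, if_false]
    rw [valZ_finVal, add_neg_cancel_right, finVal_valZ hbot htop]

lemma exists_window_repeat (hlam : ∀ v, -(r : ℤ) ≤ lam v ∧ lam v ≤ r) {e : Config} {p : ℤ}
    (hc : Periodic (globalF r lam e) p) (w : ℕ) :
    ∃ a : ℤ, ∃ n : ℕ, 0 < n ∧ ∀ i ∈ Set.Ico a (a + w), e (i + n * p) = e i := by
  let window : ℕ → Fin w → EZ := fun k j => e (j + k * p)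
  have hwindow : ∀ k, window k ∈ Set.pi Set.univ fun j : Fin w =>
      preimageValues r (globalF r lam e j) := fun k j _ => by
    simpa only [hc.nat_mul k j] using mem_preimageValues hlam e (j + k * p)
  obtain ⟨k₁, k₂, hlt, heq⟩ := (Set.Finite.pi fun j => preimageValues_finite r _)
    |>.exists_lt_map_eq_of_forall_mem hwindow
  refine ⟨k₁ * p, k₂ - k₁, by omega, fun i ⟨hi₁, hi₂⟩ => ?_⟩
  have hj := congrFun heq ⟨(i - k₁ * p).toNat, by omega⟩
  simp only [window, Int.toNat_of_nonneg (sub_nonneg.2 hi₁)] at hj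
  rw [sub_add_cancel] at hj
  rw [hj, Nat.cast_sub hlt.le]
  ring_nf

lemma globalF_periodicExtension {e : Config} {a q : ℤ} (hq : 0 < q)
    (hc : Periodic (globalF r lam e) q) (hwin : ∀ i ∈ Set.Ico a (a + 2 * r), e (i + q) = e i) :
    globalF r lam (periodicExtension e hq a) = globalF r lam e := by
  refine (periodicExtension_periodic e hq a).globalF.eq_of_eqOn_Ico hq hc (a := a + r) ?_
  rintro i ⟨hi₁, hi₂⟩
  exact globalF_congr fun j ⟨hj₁, hj₂⟩ =>
    periodicExtension_eq_of_window hq hwin j ⟨by omega, by omega⟩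

end SandAutomaton

theorem surjective_implies_P_surjective_general
    (r : ℕ) (lam : (Fin (2 * r) → EZ) → ℤ)
    (hlam : ∀ v, -(r : ℤ) ≤ lam v ∧ lam v ≤ (r : ℤ))
    (hsurj : Function.Surjective (globalF r lam)) :
    ∀ c : Config, PeriodicConf c → ∃ c', PeriodicConf c' ∧ globalF r lam c' = c := by
  rintro c ⟨p, hp0, hc⟩
  obtain ⟨p, hp, hc⟩ := Periodic.exists_pos hc hp0
  obtain ⟨e, rfl⟩ := hsurj c
  obtain ⟨a, n, hn, hwin⟩ := exists_window_repeat hlam hc (2 * r)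
  have hq : 0 < (n : ℤ) * p := by positivity
  exact ⟨periodicExtension e hq a, ⟨_, hq.ne', periodicExtension_periodic e hq a⟩,
    globalF_periodicExtension hq (hc.nat_mul n) (by exact_mod_cast hwin)⟩

/-- For every one-dimensional sand automaton (radius `r ≥ 1`, local rule `lam` taking
values in `[-r, r]`), surjectivity implies `P`-surjectivity: if the global function is
surjective then every periodic configuration has a periodic preimage. -/
theorem surjective_implies_P_surjective
    (r : ℕ) (hr : 1 ≤ r) (lam : (Fin (2 * r) → EZ) → ℤ)
    (hlam : ∀ v, -(r : ℤ) ≤ lam v ∧ lam v ≤ (r : ℤ))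
    (hsurj : Function.Surjective (globalF r lam)) :
    ∀ c : Config, PeriodicConf c → ∃ c', PeriodicConf c' ∧ globalF r lam c' = c :=
  surjective_implies_P_surjective_general r lam hlam hsurj
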